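/- arXiv:1807.06400 — 4 statements merged into one kernel-verified Lean document; each statement's English description precedes it below -/
import Mathlib

section
/- Let k be a countable field and let χ_μ : μ(k) → ℂ^× be a group homomorphism from the group of roots of unity of k to the nonzero complex numbers. Then there exists a group homomorphism χ : k^× → ℂ^× with χ restricted to μ(k) equal to χ_μ and with ker χ = ker χ_μ. -/
/-!
Since `ℂˣ` is divisible, `χμ` extends to some `χ₀ : kˣ →* ℂˣ`, and dividing by `‖χ₀‖` keeps it
an extension because roots of unity have norm one. The group `kˣ ⧸ μ(k)` is countable and
torsion-free, so it embeds into its divisible hull, a `ℚ`-vector space of countable dimension, and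
hence `ℚ`-linearly into `ℝ`; this gives `e : kˣ → ℝ` with kernel `μ(k)`. Then
`χ = (χ₀ / ‖χ₀‖) · exp ∘ e` still extends `χμ`, and `‖χ‖ = exp ∘ e` forces `ker χ ⊆ μ(k)`.
-/

open Function CommGroup

theorem IsAlgClosed.surjective_zpow_units (K : Type*) [Field K] [IsAlgClosed K] {n : ℤ}
    (hn : n ≠ 0) : Surjective fun u : Kˣ => u ^ n := by
  intro u
  obtain ⟨z, hz⟩ := IsAlgClosed.exists_pow_nat_eq (u : K) (Int.natAbs_pos.mpr hn)
  have hz0 : z ≠ 0 := fun h => u.ne_zero (by rw [← hz, h, zero_pow (Int.natAbs_ne_zero.mpr hn)])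
  have hw : Units.mk0 z hz0 ^ n.natAbs = u := Units.ext (by simpa using hz)
  rcases Int.natAbs_eq n with h | h
  · exact ⟨Units.mk0 z hz0, by dsimp only; rw [h, zpow_natCast, hw]⟩
  · refine ⟨(Units.mk0 z hz0)⁻¹, ?_⟩
    dsimp only
    rw [h, zpow_neg, inv_zpow, inv_inv, zpow_natCast, hw]

theorem MonoidHom.exists_comp_subtype_eq_of_surjective_zpow {G A : Type*} [CommGroup G]
    [CommGroup A] (hA : ∀ {n : ℤ}, n ≠ 0 → Surjective fun a : A => a ^ n) (H : Subgroup G)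
    (f : H →* A) : ∃ F : G →* A, F.comp H.subtype = f := by
  let _ : DivisibleBy (Additive A) ℤ := divisibleByOfSMulRightSurj _ _ hA
  obtain ⟨F, hF⟩ := (Module.Baer.of_divisible (Additive A)).extension_property_addMonoidHom
    H.subtype.toAdditive Subtype.val_injective f.toAdditive
  exact ⟨toAdditive.symm F, toAdditive.injective hF⟩

theorem MonoidHom.ker_eq_map_ker_comp_subtype {G A : Type*} [Group G] [Group A] {H : Subgroup G}
    {χ : G →* A} (hker : χ.ker ≤ H) : χ.ker = (χ.comp H.subtype).ker.map H.subtype := by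
  rw [← MonoidHom.comap_ker, Subgroup.map_comap_eq, Subgroup.range_subtype, inf_eq_right.mpr hker]

theorem AddCommGroup.exists_injective_addMonoidHom_real (A : Type*) [AddCommGroup A]
    [Countable A] [IsAddTorsionFree A] : ∃ f : A →+ ℝ, Injective f := by
  have : Countable (DivisibleHull A) :=
    Surjective.countable (f := fun p : A × ℕ+ => DivisibleHull.mk p.1 p.2)
      fun x => by induction x with | mk m s => exact ⟨(m, s), rfl⟩
  have hrank : Cardinal.lift.{0} (Module.rank ℚ (DivisibleHull A)) ≤
      Cardinal.lift (Module.rank ℚ ℝ) := by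
    rw [Real.rank_rat_real, Cardinal.lift_continuum]
    exact (Cardinal.lift_le_aleph0.mpr ((rank_le_card ℚ _).trans Cardinal.mk_le_aleph0)).trans
      Cardinal.aleph0_le_continuum
  obtain ⟨g, hg⟩ := lift_rank_le_iff_exists_linearMap.mp hrank
  exact ⟨g.toAddMonoidHom.comp (DivisibleHull.coeAddMonoidHom A),
    hg.comp DivisibleHull.coe_injective⟩

theorem CommGroup.exists_monoidHom_multiplicative_real_ker_eq_torsion (G : Type*) [CommGroup G]
    [Countable G] : ∃ e : G →* Multiplicative ℝ, e.ker = torsion G := by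
  have : Countable (Additive (G ⧸ torsion G)) := Quotient.countable
  obtain ⟨f, hf⟩ := AddCommGroup.exists_injective_addMonoidHom_real (Additive (G ⧸ torsion G))
  refine ⟨(AddMonoidHom.toMultiplicativeRight f).comp (QuotientGroup.mk' _), ?_⟩
  rw [← MonoidHom.comap_ker, (MonoidHom.ker_eq_bot_iff _).mpr hf, MonoidHom.comap_bot,
    QuotientGroup.ker_mk']

namespace Complex

noncomputable def unitsNormalize : ℂˣ →* ℂˣ :=
  MonoidHom.mk' (fun u => u / Units.mk0 (‖(u : ℂ)‖ : ℂ) (by simp))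
    fun u v => by ext; simp [div_mul_div_comm]

theorem norm_unitsNormalize (u : ℂˣ) : ‖(unitsNormalize u : ℂ)‖ = 1 := by
  simp [unitsNormalize]

theorem unitsNormalize_of_norm_eq_one {u : ℂˣ} (hu : ‖(u : ℂ)‖ = 1) : unitsNormalize u = u := by
  ext; simp [unitsNormalize, hu]

noncomputable def expUnitsHom : Multiplicative ℝ →* ℂˣ :=
  MonoidHom.mk' (fun x => Units.mk0 (Real.exp x.toAdd : ℂ) (by exact_mod_cast (Real.exp_pos _).ne'))
    fun x y => by ext; simp [Real.exp_add]

theorem norm_expUnitsHom (x : Multiplicative ℝ) : ‖(expUnitsHom x : ℂ)‖ = Real.exp x.toAdd := by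
  simp [expUnitsHom]

theorem norm_eq_one_of_isOfFinOrder {u : ℂˣ} (hu : IsOfFinOrder u) : ‖(u : ℂ)‖ = 1 := by
  obtain ⟨n, hn, h⟩ := hu.exists_pow_eq_one
  exact norm_eq_one_of_pow_eq_one (by simpa using congrArg Units.val h) hn.ne'

end Complex

/-- Let `k` be a countable field and `χμ : μ(k) → ℂˣ` a homomorphism on the group of
roots of unity of `k` (the torsion subgroup of `kˣ`). Then there is a homomorphism
`χ : kˣ → ℂˣ` restricting to `χμ` on `μ(k)` and with `ker χ = ker χμ`. -/
theorem stmt0 (k : Type*) [Field k] [Countable k]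
    (χμ : ↥(CommGroup.torsion kˣ) →* ℂˣ) :
    ∃ χ : kˣ →* ℂˣ,
      (∀ x : ↥(CommGroup.torsion kˣ), χ (x : kˣ) = χμ x) ∧
      χ.ker = χμ.ker.map (CommGroup.torsion kˣ).subtype := by
  obtain ⟨χ₀, hχ₀⟩ := MonoidHom.exists_comp_subtype_eq_of_surjective_zpow
    (IsAlgClosed.surjective_zpow_units ℂ) _ χμ
  have : Countable kˣ := Units.val_injective.countable
  obtain ⟨e, he⟩ := exists_monoidHom_multiplicative_real_ker_eq_torsion kˣ
  set χ := Complex.unitsNormalize.comp χ₀ * Complex.expUnitsHom.comp e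
  have hres : χ.comp (torsion kˣ).subtype = χμ := by
    ext1 x
    have hex : e x = 1 := by rw [← MonoidHom.mem_ker, he]; exact x.2
    have hχ₀x : χ₀ x = χμ x := congr($hχ₀ x)
    have hx : IsOfFinOrder x := Submonoid.isOfFinOrder_coe.mp x.2
    have hχμx := Complex.norm_eq_one_of_isOfFinOrder (χμ.isOfFinOrder hx)
    simp [χ, hex, hχ₀x, Complex.unitsNormalize_of_norm_eq_one hχμx]
  refine ⟨χ, fun x => congr($hres x), ?_⟩
  rw [← hres]
  refine MonoidHom.ker_eq_map_ker_comp_subtype fun g hg => ?_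
  rw [← he, MonoidHom.mem_ker]
  have hnorm := congrArg (fun u : ℂˣ => ‖(u : ℂ)‖) hg
  simpa [χ, Complex.norm_unitsNormalize, Complex.norm_expUnitsHom] using hnorm
end

section
/- Every countable field k admits an injective group homomorphism k^× ↪ ℂ^× of its multiplicative group into the nonzero complex numbers. -/
/-!
In characteristic zero the multiplicative monoid of `k` sits inside `k` itself; in characteristic
`p` the Teichmüller character embeds it into the Witt vectors `W(k)`, a domain of characteristic
zero. Either way we get a characteristic-zero domain `R` with `#R ≤ 𝔠`. Adjoining continuum many
indeterminates to `R` and passing to the algebraic closure of the fraction field gives an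
algebraically closed field of characteristic zero and cardinality `𝔠`, which is isomorphic to `ℂ`
by Steinitz's classification.
-/

open Cardinal Function

universe u

theorem IsAlgClosed.nonempty_ringEquiv_complex {K : Type u} [Field K] [IsAlgClosed K]
    [CharZero K] (hK : #K = 𝔠) : Nonempty (K ≃+* ℂ) :=
  IsAlgClosed.ringEquiv_of_equiv_of_charZero (hK ▸ aleph0_lt_continuum)
    (lift_mk_eq'.1 (by simp [hK]))

theorem AlgebraicClosure.cardinalMk_eq (L : Type u) [Field L] [Infinite L] :
    #(AlgebraicClosure L) = #L :=
  le_antisymm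
    ((Algebra.IsAlgebraic.cardinalMk_le_max L _).trans (max_le le_rfl (aleph0_le_mk L)))
    (mk_le_of_injective (algebraMap L (AlgebraicClosure L)).injective)

theorem exists_injective_ringHom_complex_of_cardinalMk_eq {L : Type u} [Field L] [CharZero L]
    (hL : #L = 𝔠) : ∃ f : L →+* ℂ, Injective f := by
  have : Infinite L := infinite_iff.2 (hL ▸ aleph0_le_continuum)
  obtain ⟨e⟩ := IsAlgClosed.nonempty_ringEquiv_complex
    ((AlgebraicClosure.cardinalMk_eq L).trans hL)
  exact ⟨e.toRingHom.comp (algebraMap L _), e.injective.comp (algebraMap L _).injective⟩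

theorem exists_injective_ringHom_complex {R : Type u} [CommRing R] [IsDomain R] [CharZero R]
    (hR : #R ≤ 𝔠) : ∃ f : R →+* ℂ, Injective f := by
  let P := MvPolynomial (ULift.{u} ℝ) R
  have hP : #(FractionRing P) = 𝔠 := by
    rw [mk_fractionRing, MvPolynomial.cardinalMk_eq_max]
    simp [mk_real, hR, aleph0_le_continuum]
  let ι : R →+* FractionRing P := (algebraMap P _).comp MvPolynomial.C
  have hι : Injective ι := (IsFractionRing.injective P _).comp (MvPolynomial.C_injective _ R)
  have := charZero_of_injective_ringHom hι
  obtain ⟨f, hf⟩ := exists_injective_ringHom_complex_of_cardinalMk_eq hP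
  exact ⟨f.comp ι, hf.comp hι⟩

namespace WittVector

theorem cardinalMk_eq (p : ℕ) (R : Type u) : #(WittVector p R) = #R ^ ℵ₀ := by
  have e : WittVector p R ≃ (ℕ → R) := ⟨coeff, WittVector.mk p, fun _ => rfl, fun _ => rfl⟩
  simp [mk_congr e]

variable (p : ℕ) [Fact p.Prime] (R : Type u) [CommRing R]

instance instCharZero [CharP R p] : CharZero (WittVector p R) := by
  have : Nontrivial R := CharP.nontrivial_of_char_ne_one (Fact.out : p.Prime).ne_one
  have : CharZero (WittVector p (ZMod p)) :=
    charZero_of_injective_ringHom (WittVector.equiv p).symm.injective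
  exact charZero_of_injective_ringHom (map_injective _ (ZMod.castHom (dvd_refl p) R).injective)

theorem teichmuller_injective : Injective (teichmuller p : R →* WittVector p R) := fun a b h => by
  simpa only [teichmuller_coeff_zero] using congrArg (coeff · 0) h

end WittVector

theorem exists_injective_monoidHom_complex_of_countable (k : Type u) [Field k] [Countable k] :
    ∃ φ : k →* ℂ, Injective φ := by
  obtain _ | ⟨p, _, _⟩ := CharP.exists' k
  · obtain ⟨f, hf⟩ :=
      exists_injective_ringHom_complex ((mk_le_aleph0 (α := k)).trans aleph0_le_continuum)
    exact ⟨f.toMonoidHom, hf⟩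
  · have hW : #(WittVector p k) ≤ 𝔠 := by
      rw [WittVector.cardinalMk_eq p, ← aleph0_power_aleph0]
      exact power_le_power_right mk_le_aleph0
    obtain ⟨f, hf⟩ := exists_injective_ringHom_complex hW
    exact ⟨f.toMonoidHom.comp (WittVector.teichmuller p),
      hf.comp (WittVector.teichmuller_injective p k)⟩

/-- Every countable field `k` admits an injective group homomorphism `kˣ ↪ ℂˣ`. -/
theorem stmt1 (k : Type*) [Field k] [Countable k] :
    ∃ χ : kˣ →* ℂˣ, Function.Injective χ := by
  obtain ⟨φ, hφ⟩ := exists_injective_monoidHom_complex_of_countable k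
  exact ⟨Units.map φ, Units.map_injective hφ⟩
end

section
/- Let L be a field on which the N-th power map L^× → L^×, y ↦ y^N, is surjective for every positive integer N, let σ̄ be a field automorphism of L, and let ν ≠ ν' be positive integers. Set H = { y^ν σ̄(y)^{−ν'} : y ∈ L^× }, a subgroup of L^×. Then every coset of H in L^× contains a root of unity ζ ∈ L satisfying ζ^{ν^i − ν'^i} = 1 for some i ≥ 1. In particular, L^×/H is a torsion group. -/
/-- Let `L` be a field on which every `N`-th power map of `Lˣ` is surjective, `σ` a
field automorphism of `L` such that every element is fixed by some positive power of
`σ`, and `ν ≠ ν'` positive integers. With `H = { y^ν σ(y)^{-ν'} }`, every coset of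
`H` in `Lˣ` contains a root of unity `ζ` with `ζ^(ν^i − ν'^i) = 1` for some `i ≥ 1`;
in particular `Lˣ/H` is torsion. -/
theorem stmt6 (L : Type*) [Field L]
    (hdiv : ∀ N : ℕ, 0 < N → ∀ c : Lˣ, ∃ y : Lˣ, y ^ N = c)
    (σ : L ≃+* L)
    (hfix : ∀ c : Lˣ, ∃ i : ℕ, 1 ≤ i ∧ (⇑σ)^[i] (c : L) = (c : L))
    (ν ν' : ℕ) (hν : 0 < ν) (hν' : 0 < ν') (hne : ν ≠ ν') :
    ∀ c : Lˣ,
      (∃ (ζ : Lˣ) (i : ℕ), 1 ≤ i ∧ ζ ^ ((ν : ℤ) ^ i - (ν' : ℤ) ^ i) = 1 ∧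
        ∃ y : Lˣ, c = ζ * (y ^ ν * ((Units.map ((σ : L →+* L) : L →* L)) y)⁻¹ ^ ν')) ∧
      (∃ m : ℕ, 1 ≤ m ∧
        ∃ y : Lˣ, c ^ m = y ^ ν * ((Units.map ((σ : L →+* L) : L →* L)) y)⁻¹ ^ ν') := by
  intro c
  set φ : Lˣ →* Lˣ := Units.map ((σ : L →+* L) : L →* L) with hφ
  -- coercion of iterates of φ
  have hcoe : ∀ (n : ℕ) (x : Lˣ), (((⇑φ)^[n] x : Lˣ) : L) = (⇑σ)^[n] (x : L) := by
    intro n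
    induction n with
    | zero => intro x; simp
    | succ n ih =>
      intro x
      rw [Function.iterate_succ_apply', Function.iterate_succ_apply', ← ih x]
      rfl
  obtain ⟨i, hi, hci⟩ := hfix c
  set D : ℤ := (ν : ℤ) ^ i - (ν' : ℤ) ^ i with hD
  have hD0 : D ≠ 0 := by
    have hne' : ν ^ i ≠ ν' ^ i := fun h =>
      hne (Nat.pow_left_injective (by omega) h)
    rw [hD, sub_ne_zero]
    exact_mod_cast fun h => hne' (by exact_mod_cast h)
  set M : ℕ := D.natAbs with hM
  have hMpos : 0 < M := Int.natAbs_pos.mpr hD0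
  obtain ⟨z0, hz0⟩ := hdiv M hMpos c
  -- choose z with z ^ D = c
  obtain ⟨z, hz⟩ : ∃ z : Lˣ, z ^ D = c := by
    rcases le_or_gt 0 D with h | h
    · refine ⟨z0, ?_⟩
      rw [show D = (M : ℤ) from (Int.natAbs_of_nonneg h).symm, zpow_natCast, hz0]
    · refine ⟨z0⁻¹, ?_⟩
      rw [inv_zpow, ← zpow_neg,
        show -D = (M : ℤ) by rw [hM, Int.ofNat_natAbs_of_nonpos h.le],
        zpow_natCast, hz0]
  set u : Lˣ := (⇑φ)^[i] z with hu
  -- φ iterate commutes with zpow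
  have hiterzpow : ∀ (n : ℕ) (x : Lˣ) (k : ℤ), (⇑φ)^[n] (x ^ k) = ((⇑φ)^[n] x) ^ k := by
    intro n
    induction n with
    | zero => intro x k; simp
    | succ n ih =>
      intro x k
      rw [Function.iterate_succ_apply', Function.iterate_succ_apply', ih, map_zpow]
  have huD : u ^ D = c := by
    rw [hu, ← hiterzpow, hz]
    exact Units.ext (by rw [hcoe]; exact hci)
  set ζ : Lˣ := (u * z⁻¹) ^ (ν' ^ i) with hζ
  have hζD : ζ ^ D = 1 := by
    have h1 : ζ ^ D = ((u * z⁻¹) ^ D) ^ (ν' ^ i) := by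
      rw [hζ, ← zpow_natCast (u * z⁻¹) (ν' ^ i), ← zpow_mul, Int.mul_comm, zpow_mul,
        zpow_natCast]
    rw [h1, mul_zpow, inv_zpow, hz, huD, mul_inv_cancel, one_pow]
  -- the telescoping element y
  set y : Lˣ := ∏ α ∈ Finset.range i, ((⇑φ)^[α] z) ^ (ν ^ (i - 1 - α) * ν' ^ α) with hy
  set f : ℕ → Lˣ := fun α => ((⇑φ)^[α] z) ^ (ν ^ (i - α) * ν' ^ α) with hf
  have h1 : y ^ ν = ∏ α ∈ Finset.range i, f α := by
    rw [hy, ← Finset.prod_pow]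
    refine Finset.prod_congr rfl fun α hα => ?_
    rw [← pow_mul, hf]
    congr 1
    have : i - α = i - 1 - α + 1 := by
      have := Finset.mem_range.mp hα; omega
    rw [this, pow_succ]; ring
  have h2 : (φ y) ^ ν' = ∏ α ∈ Finset.range i, f (α + 1) := by
    rw [hy, map_prod, ← Finset.prod_pow]
    refine Finset.prod_congr rfl fun α hα => ?_
    rw [map_pow, ← pow_mul, hf]
    have hstep : φ ((⇑φ)^[α] z) = (⇑φ)^[α + 1] z := (Function.iterate_succ_apply' ⇑φ α z).symm
    rw [hstep]
    congr 1
    have : i - (α + 1) = i - 1 - α := by omega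
    rw [this, pow_succ]; ring
  have htel : (∏ α ∈ Finset.range i, f (α + 1)) * f 0 =
      (∏ α ∈ Finset.range i, f α) * f i := by
    rw [← Finset.prod_range_succ', Finset.prod_range_succ]
  have hf0 : f 0 = z ^ (ν ^ i) := by simp [hf]
  have hfi : f i = u ^ (ν' ^ i) := by simp [hf, hu]
  have h3 : y ^ ν * ((φ y)⁻¹) ^ ν' = z ^ (ν ^ i) * (u ^ (ν' ^ i))⁻¹ := by
    rw [inv_pow, h1, h2, ← hf0, ← hfi, ← div_eq_mul_inv, ← div_eq_mul_inv,
      div_eq_div_iff_mul_eq_mul, ← htel, mul_comm]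
  have hmain : c = ζ * (y ^ ν * ((φ y)⁻¹) ^ ν') := by
    rw [h3, hζ, mul_pow, inv_pow]
    have : c = z ^ (ν ^ i) * (z ^ (ν' ^ i))⁻¹ := by
      rw [← hz, hD, zpow_sub]
      norm_cast
    rw [this, mul_comm (z ^ ν ^ i) ((u ^ ν' ^ i)⁻¹), mul_mul_mul_comm,
      mul_inv_cancel, one_mul, mul_comm]
  refine ⟨⟨ζ, i, hi, hζD, y, hmain⟩, M, hMpos, y ^ M, ?_⟩
  have hζM : ζ ^ M = 1 := by
    rcases Int.natAbs_eq D with h | h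
    · rw [← zpow_natCast, ← h, hζD]
    · rw [← zpow_natCast, show (M : ℤ) = -D by omega, zpow_neg, hζD, inv_one]
  have e1 : (y ^ ν) ^ M = (y ^ M) ^ ν := by rw [← pow_mul, mul_comm, pow_mul]
  have e2 : (((φ y)⁻¹) ^ ν') ^ M = ((φ (y ^ M))⁻¹) ^ ν' := by
    rw [← pow_mul, mul_comm ν' M, pow_mul, inv_pow (φ y) M, ← map_pow]
  calc c ^ M = (ζ * (y ^ ν * ((φ y)⁻¹) ^ ν')) ^ M := by rw [← hmain]
    _ = ζ ^ M * ((y ^ ν) ^ M * (((φ y)⁻¹) ^ ν') ^ M) := by rw [mul_pow, mul_pow]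
    _ = (y ^ M) ^ ν * ((φ (y ^ M))⁻¹) ^ ν' := by rw [hζM, one_mul, e1, e2]
end

section
/- Let p be a prime and let Γ = p^ℤ act on the product A × ℚ^{>0}, where A = ẑ_{(p)}^× / q^{ẑ} for a fixed prime power q = p^d (the quotient of the prime-to-p profinite units by the closure of the subgroup generated by q), with p^n acting by (a, r) ↦ (p^{−n} a, p^n r). Let ℚ^{>0} act on the quotient S = A ×_Γ ℚ^{>0} via the second factor. Then the stabilizer in ℚ^{>0} of every point [a, r] ∈ S equals q^ℤ. -/
/-- For each prime `l ≠ p`, `l` is prime. -/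
instance factPrimeOfNe (p : ℕ) (l : {l : ℕ // Nat.Prime l ∧ l ≠ p}) :
    Fact (Nat.Prime l.1) := ⟨l.2.1⟩

/-- The prime-to-`p` profinite completion `ẑ_{(p)} = ∏_{l ≠ p} ℤ_l`. -/
abbrev ZhatAwayFrom (p : ℕ) : Type :=
  Π l : {l : ℕ // Nat.Prime l ∧ l ≠ p}, ℤ_[l.1]

/-!
In `ℚ^{>0}` the relation `r q' = p ^ n r` forces `q' = p ^ n`, so everything reduces to: if
`p ^ n` lies in the closure of `p ^ (d ℤ)` in `ẑ_{(p)}ˣ`, then `d ∣ n`. Reduction modulo `l ^ k`,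
for a prime `l ≠ p`, is locally constant, so it maps this closure into the subgroup generated by
`p ^ d` in `(ℤ/l^k)ˣ`, where `p ^ n ∈ ⟨p ^ d⟩` forces `gcd (ord p) d ∣ n`. It remains to make
`ord p` divisible by an arbitrary prime power `s ^ e`: for `s ≠ p` take `l = s` and `k` large
(the order of `p` modulo `s ^ k` is unbounded, while its prime-to-`s` part divides `s - 1`); for
`s = p` take for `l` a prime factor of `Φ_{p^(e+1)}(p)`, modulo which `p` has order exactly
`p ^ (e + 1)`.
-/

open Subgroup

namespace Nat

theorem dvd_pow_mul_of_dvd_pow_mul_of_not_pow_succ_dvd {s t a b e : ℕ} (hs : s.Prime)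
    (h : t ∣ s ^ a * b) (hte : ¬ s ^ (e + 1) ∣ t) : t ∣ s ^ e * b := by
  have ht : t ≠ 0 := by rintro rfl; exact hte (dvd_zero _)
  have hv : t.factorization s ≤ e := by
    by_contra! hlt
    exact hte ((hs.pow_dvd_iff_le_factorization ht).2 hlt)
  rw [← ordProj_mul_ordCompl_eq_self t s]
  exact mul_dvd_mul (pow_dvd_pow s hv) <|
    ((coprime_ordCompl hs ht).symm.pow_right a).dvd_of_dvd_mul_left ((ordCompl_dvd t s).trans h)

theorem exists_pow_dvd_orderOf_natCast_zmod_prime_pow {a s : ℕ} (ha : 1 < a) (hs : s.Prime)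
    (has : a.Coprime s) (e : ℕ) : ∃ k, s ^ e ∣ orderOf (a : ZMod (s ^ k)) := by
  obtain _ | e := e
  · exact ⟨0, by simp⟩
  set E := φ (s ^ (e + 1))
  set N := a ^ E - 1
  have hN : N ≠ 0 := by
    have : 1 < a ^ E := one_lt_pow (totient_pos.2 (pow_pos hs.pos _)).ne' ha
    omega
  -- if `s ^ (e + 1) ∤ ord`, then `ord ∣ φ (s ^ (e + 1))`, whence `s ^ N ∣ N`
  refine ⟨N, by_contra fun hnot => ?_⟩
  have hcop : a.Coprime (s ^ N) := has.pow_right N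
  have hord : orderOf (a : ZMod (s ^ N)) ∣ E := by
    have h1 : orderOf (a : ZMod (s ^ N)) ∣ φ (s ^ N) := orderOf_dvd_of_pow_eq_one <| by
      exact_mod_cast (ZMod.natCast_eq_natCast_iff _ _ _).2 (ModEq.pow_totient hcop)
    rw [totient_prime_pow hs (pos_of_ne_zero hN)] at h1
    rw [show E = s ^ e * (s - 1) from totient_prime_pow_succ hs e]
    exact dvd_pow_mul_of_dvd_pow_mul_of_not_pow_succ_dvd hs h1 hnot
  have hpow : (a : ZMod (s ^ N)) ^ E = 1 := orderOf_dvd_iff_pow_eq_one.1 hord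
  have hdvd : s ^ N ∣ N := by
    refine (modEq_iff_dvd' (one_le_pow _ _ (by omega))).1 ?_
    exact ((ZMod.natCast_eq_natCast_iff _ _ _).1 (by exact_mod_cast hpow)).symm
  exact (le_of_dvd (pos_of_ne_zero hN) hdvd).not_gt (Nat.lt_pow_self hs.one_lt)

open Polynomial in
theorem exists_prime_ne_orderOf_natCast_eq_pow {p : ℕ} (hp : p.Prime) {e : ℕ} (he : e ≠ 0) :
    ∃ l, l.Prime ∧ l ≠ p ∧ orderOf (p : ZMod l) = p ^ e := by
  have hpe : 1 < p ^ e := one_lt_pow he hp.one_lt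
  set c := eval (p : ℤ) (cyclotomic (p ^ e) ℤ)
  have hc : 1 < c.natAbs := by
    have := sub_one_lt_natAbs_cyclotomic_eval hpe hp.one_lt.ne'
    have := hp.two_le
    omega
  set l := c.natAbs.minFac
  have hl : l.Prime := minFac_prime hc.ne'
  have hlc : (l : ℤ) ∣ c := Int.natCast_dvd.2 (minFac_dvd _)
  -- `c ≡ Φ(0) = 1 (mod p)`
  have hlp : l ≠ p := by
    intro hlp
    rw [hlp] at hlc
    have h := sub_dvd_eval_sub (p : ℤ) 0 (cyclotomic (p ^ e) ℤ)
    rw [sub_zero, ← coeff_zero_eq_eval_zero, cyclotomic_coeff_zero _ hpe, dvd_sub_right hlc] at h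
    exact hp.one_lt.ne' (Nat.dvd_one.1 (by exact_mod_cast h))
  have := Fact.mk hl
  have hroot : (cyclotomic (p ^ e) (ZMod l)).IsRoot (p : ZMod l) := by
    rw [IsRoot.def, ← map_cyclotomic_int, eval_natCast_map, eq_intCast,
      ZMod.intCast_zmod_eq_zero_iff_dvd]
    exact hlc
  have : NeZero ((p ^ e : ℕ) : ZMod l) := by
    refine NeZero.of_not_dvd (ZMod l) (p := l) fun hdvd => hlp ?_
    exact (prime_dvd_prime_iff_eq hl hp).1 (hl.dvd_of_dvd_pow hdvd)
  exact ⟨l, hl, hlp, ((isRoot_cyclotomic_iff.1 hroot).eq_orderOf).symm⟩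

theorem exists_prime_ne_pow_dvd_orderOf_natCast {p s : ℕ} (hp : p.Prime) (hs : s.Prime)
    (e : ℕ) : ∃ l k, l.Prime ∧ l ≠ p ∧ s ^ e ∣ orderOf (p : ZMod (l ^ k)) := by
  rcases eq_or_ne s p with rfl | hsp
  · obtain ⟨l, hl, hls, hord⟩ := exists_prime_ne_orderOf_natCast_eq_pow hs (succ_ne_zero e)
    exact ⟨l, 1, hl, hls, by rw [pow_one, hord]; exact pow_dvd_pow s e.le_succ⟩
  · obtain ⟨k, hk⟩ := exists_pow_dvd_orderOf_natCast_zmod_prime_pow hp.one_lt hs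
      ((coprime_primes hp hs).2 hsp.symm) e
    exact ⟨s, k, hs, hsp, hk⟩

end Nat

theorem Subgroup.gcd_orderOf_dvd_of_zpow_mem_zpowers_pow {G : Type*} [Group G] {x : G} {n : ℤ}
    {d : ℕ} (h : x ^ n ∈ zpowers (x ^ d)) : ((orderOf x).gcd d : ℤ) ∣ n := by
  obtain ⟨m, hm⟩ := mem_zpowers_iff.1 h
  have hord : (orderOf x : ℤ) ∣ n - d * m := by
    rw [orderOf_dvd_iff_zpow_eq_one, zpow_sub, zpow_mul, zpow_natCast, hm, mul_inv_cancel]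
  have hgcd : ((orderOf x).gcd d : ℤ) ∣ n - d * m + d * m :=
    dvd_add ((Int.natCast_dvd_natCast.2 (Nat.gcd_dvd_left _ _)).trans hord)
      ((Int.natCast_dvd_natCast.2 (Nat.gcd_dvd_right _ _)).mul_right m)
  rwa [sub_add_cancel] at hgcd

theorem Subgroup.map_mem_map_of_mem_topologicalClosure {G H : Type*} [Group G]
    [TopologicalSpace G] [IsTopologicalGroup G] [Group H] {f : G →* H} (hf : IsLocallyConstant f)
    {S : Subgroup G} {x : G} (hx : x ∈ S.topologicalClosure) : f x ∈ S.map f :=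
  topologicalClosure_minimal S (le_comap_map f S) ⟨hf ((S.map f : Set H)ᶜ)⟩ hx

theorem PadicInt.isLocallyConstant_toZModPow {l : ℕ} [Fact l.Prime] (k : ℕ) :
    IsLocallyConstant (toZModPow k : ℤ_[l] → ZMod (l ^ k)) := by
  refine IsLocallyConstant.iff_isOpen_fiber_apply.2 fun x => ?_
  convert IsUltrametricDist.isOpen_closedBall x (r := (l : ℝ) ^ (-(k : ℤ)))
    (zpow_ne_zero _ (Nat.cast_ne_zero.2 (Fact.out : l.Prime).ne_zero))
  ext z
  simp only [Set.mem_preimage, Set.mem_singleton_iff, Metric.mem_closedBall, dist_eq_norm,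
    norm_le_pow_iff_mem_span_pow, ← ker_toZModPow, RingHom.mem_ker, map_sub, sub_eq_zero]

namespace ZhatAwayFrom

variable {p : ℕ}

noncomputable def toZModPow (l : {l : ℕ // l.Prime ∧ l ≠ p}) (k : ℕ) :
    ZhatAwayFrom p →+* ZMod (l.1 ^ k) :=
  (PadicInt.toZModPow k).comp (Pi.evalRingHom _ l)

theorem isLocallyConstant_toZModPow (l : {l : ℕ // l.Prime ∧ l ≠ p}) (k : ℕ) :
    IsLocallyConstant (toZModPow l k : ZhatAwayFrom p → ZMod (l.1 ^ k)) :=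
  (PadicInt.isLocallyConstant_toZModPow k).comp_continuous (continuous_apply l)

theorem isLocallyConstant_unitsMap_toZModPow (l : {l : ℕ // l.Prime ∧ l ≠ p}) (k : ℕ) :
    IsLocallyConstant (Units.map (toZModPow l k : ZhatAwayFrom p →* ZMod (l.1 ^ k))) :=
  IsLocallyConstant.desc _ Units.val
    ((isLocallyConstant_toZModPow l k).comp_continuous Units.continuous_val) Units.val_injective

theorem natCast_dvd_of_pow_mem_topologicalClosure (hp : p.Prime) {u : (ZhatAwayFrom p)ˣ}
    (hu : (u : ZhatAwayFrom p) = p) {d : ℕ} {n : ℤ}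
    (h : u ^ n ∈ (zpowers (u ^ d)).topologicalClosure) : (d : ℤ) ∣ n := by
  rw [Int.natCast_dvd, Nat.dvd_iff_prime_pow_dvd_dvd]
  intro s e hs hse
  obtain ⟨l, k, hl, hlp, hord⟩ := Nat.exists_prime_ne_pow_dvd_orderOf_natCast hp hs e
  set F := Units.map (toZModPow ⟨l, hl, hlp⟩ k : ZhatAwayFrom p →* ZMod (l ^ k))
  have hF : F u ^ n ∈ zpowers (F u ^ d) := by
    simpa [MonoidHom.map_zpowers] using
      map_mem_map_of_mem_topologicalClosure (isLocallyConstant_unitsMap_toZModPow _ k) h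
  have hFu : orderOf (F u) = orderOf (p : ZMod (l ^ k)) := by
    rw [← orderOf_units]
    simp [F, toZModPow, hu]
  rw [← Int.natCast_dvd]
  exact (Int.natCast_dvd_natCast.2 (Nat.dvd_gcd (hFu ▸ hord) hse)).trans
    (gcd_orderOf_dvd_of_zpow_mem_zpowers_pow hF)

end ZhatAwayFrom

theorem stmt19_general (p d : ℕ) (hp : p.Prime)
    (pu qu : (ZhatAwayFrom p)ˣ)
    (hpu : (pu : ZhatAwayFrom p) = (p : ZhatAwayFrom p))
    (hqu : (qu : ZhatAwayFrom p) = (p : ZhatAwayFrom p) ^ d)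
    (a : (ZhatAwayFrom p)ˣ ⧸ (Subgroup.zpowers qu).topologicalClosure)
    (r q' : ℚ) (hr : 0 < r) :
    (∃ n : ℤ,
        (QuotientGroup.mk pu :
            (ZhatAwayFrom p)ˣ ⧸ (Subgroup.zpowers qu).topologicalClosure) ^ n * a = a ∧
        r * q' = (p : ℚ) ^ n * r) ↔
    ∃ m : ℤ, q' = ((p : ℚ) ^ d) ^ m := by
  obtain rfl : qu = pu ^ d := Units.ext (by rw [Units.val_pow_eq_pow_val, hpu, hqu])
  have hfix (n : ℤ) : (QuotientGroup.mk pu : _ ⧸ (zpowers (pu ^ d)).topologicalClosure) ^ n * a = a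
      ↔ pu ^ n ∈ (zpowers (pu ^ d)).topologicalClosure := by
    rw [← eq_mul_inv_iff_mul_eq, mul_inv_cancel, ← QuotientGroup.mk_zpow, QuotientGroup.eq_one_iff]
  simp only [hfix, mul_comm r, mul_left_inj' hr.ne', ← zpow_natCast, ← zpow_mul]
  constructor
  · rintro ⟨n, hn, rfl⟩
    obtain ⟨m, rfl⟩ := ZhatAwayFrom.natCast_dvd_of_pow_mem_topologicalClosure hp hpu hn
    exact ⟨m, rfl⟩
  · rintro ⟨m, rfl⟩
    exact ⟨d * m, le_topologicalClosure _ (mem_zpowers_iff.2 ⟨m, (zpow_mul _ _ _).symm⟩), rfl⟩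

/-- Let `q = p^d` be a prime power, `A = ẑ_{(p)}ˣ / q^ẑ` the quotient of the
prime-to-`p` profinite units by the closed subgroup topologically generated by `q`,
and let `Γ = p^ℤ` act on `A × ℚ^{>0}` by `p^n (a, r) = (p^{-n} a, p^n r)`. Then the
stabilizer in `ℚ^{>0}` of every point `[a, r]` of `A ×_Γ ℚ^{>0}` is exactly `q^ℤ`:
`q'` fixes `[a, r]` (i.e. `∃ n, p^n • a = a` in `A` and `r q' = p^n r`) iff
`q' = q^m` for some `m ∈ ℤ`. -/
theorem stmt19 (p d : ℕ) (hp : p.Prime) (hd : 1 ≤ d)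
    (pu qu : (ZhatAwayFrom p)ˣ)
    (hpu : (pu : ZhatAwayFrom p) = (p : ZhatAwayFrom p))
    (hqu : (qu : ZhatAwayFrom p) = (p : ZhatAwayFrom p) ^ d)
    (a : (ZhatAwayFrom p)ˣ ⧸ (Subgroup.zpowers qu).topologicalClosure)
    (r q' : ℚ) (hr : 0 < r) (hq' : 0 < q') :
    (∃ n : ℤ,
        (QuotientGroup.mk pu :
            (ZhatAwayFrom p)ˣ ⧸ (Subgroup.zpowers qu).topologicalClosure) ^ n * a = a ∧
        r * q' = (p : ℚ) ^ n * r) ↔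
    ∃ m : ℤ, q' = ((p : ℚ) ^ d) ^ m :=
  stmt19_general p d hp pu qu hpu hqu a r q' hr
end
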